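/- arXiv:1304.5698 — 10 statements merged into one kernel-verified Lean document; each statement's English description precedes it below -/
import Mathlib

section
/- Let I ⊆ ℝ be an open interval, and let a₀, a₁, a₂ : I → ℂ be functions with a₂ differentiable and nonvanishing on I. Set b₁ = −(a₁ + a₂'/a₂) and b₀ = a₀·a₂. If y : I → ℂ is twice differentiable, nonvanishing on I, and satisfies y'' + b₁·y' + b₀·y = 0 on I, then the function v = −(1/a₂)·(y'/y) satisfies the Riccati equation v' = a₀ + a₁·v + a₂·v² on I. -/
/-- Transformation B: from the general second-order linear ODE
`y'' + b₁ y' + b₀ y = 0` to the general Riccati equation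
`v' = a₀ + a₁ v + a₂ v²` via `v = -(1/a₂)(y'/y)`, where
`b₁ = -(a₁ + a₂'/a₂)` and `b₀ = a₀ a₂`. -/
theorem stmt_0 (I : Set ℝ) (hI : IsOpen I) (hIconn : I.OrdConnected)
    (a₀ a₁ a₂ a₂' : ℝ → ℂ)
    (ha₂ : ∀ t ∈ I, HasDerivAt a₂ (a₂' t) t)
    (ha₂ne : ∀ t ∈ I, a₂ t ≠ 0)
    (b₁ b₀ : ℝ → ℂ)
    (hb₁ : ∀ t ∈ I, b₁ t = -(a₁ t + a₂' t / a₂ t))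
    (hb₀ : ∀ t ∈ I, b₀ t = a₀ t * a₂ t)
    (y y' y'' : ℝ → ℂ)
    (hy : ∀ t ∈ I, HasDerivAt y (y' t) t)
    (hy' : ∀ t ∈ I, HasDerivAt y' (y'' t) t)
    (hyne : ∀ t ∈ I, y t ≠ 0)
    (hode : ∀ t ∈ I, y'' t + b₁ t * y' t + b₀ t * y t = 0)
    (v : ℝ → ℂ)
    (hv : ∀ t ∈ I, v t = -(1 / a₂ t) * (y' t / y t)) :
    ∀ t ∈ I, HasDerivAt v (a₀ t + a₁ t * v t + a₂ t * v t ^ 2) t := by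
  intro t ht
  have ha2t := ha₂ne t ht
  have hyt := hyne t ht
  -- derivative of g = fun s => -(y' s / (a₂ s * y s))
  have hden : HasDerivAt (fun s => a₂ s * y s) (a₂' t * y t + a₂ t * y' t) t :=
    (ha₂ t ht).mul (hy t ht)
  have hdne : a₂ t * y t ≠ 0 := mul_ne_zero ha2t hyt
  have hg : HasDerivAt (fun s => -(y' s / (a₂ s * y s)))
      (-((y'' t * (a₂ t * y t) - y' t * (a₂' t * y t + a₂ t * y' t)) / (a₂ t * y t) ^ 2)) t :=
    ((hy' t ht).div hden hdne).neg
  have heq : v =ᶠ[nhds t] fun s => -(y' s / (a₂ s * y s)) := by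
    filter_upwards [hI.mem_nhds ht] with s hs
    rw [hv s hs]
    field_simp
  have hD := hg.congr_of_eventuallyEq heq
  refine HasDerivAt.congr_deriv hD ?_
  have hode' := hode t ht
  rw [hb₁ t ht, hb₀ t ht] at hode'
  have hy'' : y'' t = (a₁ t + a₂' t / a₂ t) * y' t - a₀ t * a₂ t * y t := by
    linear_combination hode'
  rw [hv t ht, hy'']
  field_simp
  ring
end

section
/- Let I ⊆ ℝ be an open interval, and let a₀, a₁, a₂ : I → ℂ with a₁ differentiable, a₂ twice differentiable and nonvanishing on I. Define α = −(a₂'/(2a₂²) + a₁/(2a₂)), β = −1/a₂, and r = (a₀ + a₁·α + a₂·α² − α')/β. If w : I → ℂ is differentiable and satisfies w' = r − w² on I, then v = α + β·w satisfies the Riccati equation v' = a₀ + a₁·v + a₂·v² on I. -/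
/-- (Inverse of) transformation T: from the reduced Riccati equation
`w' = r - w²` to the general Riccati equation `v' = a₀ + a₁ v + a₂ v²`
via `v = α + β w`, where `α = -(a₂'/(2a₂²) + a₁/(2a₂))`, `β = -1/a₂`
and `r = (a₀ + a₁ α + a₂ α² - α')/β`. -/
theorem stmt_2 (I : Set ℝ) (hI : IsOpen I) (hIconn : I.OrdConnected)
    (a₀ a₁ a₁' a₂ a₂' a₂'' : ℝ → ℂ)
    (ha₁ : ∀ t ∈ I, HasDerivAt a₁ (a₁' t) t)
    (ha₂ : ∀ t ∈ I, HasDerivAt a₂ (a₂' t) t)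
    (ha₂' : ∀ t ∈ I, HasDerivAt a₂' (a₂'' t) t)
    (ha₂ne : ∀ t ∈ I, a₂ t ≠ 0)
    (α β r : ℝ → ℂ)
    (hα : ∀ t ∈ I, α t = -(a₂' t / (2 * a₂ t ^ 2) + a₁ t / (2 * a₂ t)))
    (hβ : ∀ t ∈ I, β t = -(1 / a₂ t))
    (hr : ∀ t ∈ I,
      r t = (a₀ t + a₁ t * α t + a₂ t * α t ^ 2 - deriv α t) / β t)
    (w : ℝ → ℂ)
    (hw : ∀ t ∈ I, HasDerivAt w (r t - w t ^ 2) t)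
    (v : ℝ → ℂ)
    (hv : ∀ t ∈ I, v t = α t + β t * w t) :
    ∀ t ∈ I, HasDerivAt v (a₀ t + a₁ t * v t + a₂ t * v t ^ 2) t := by
  intro t ht
  have hne : a₂ t ≠ 0 := ha₂ne t ht
  have hmem : I ∈ nhds t := hI.mem_nhds ht
  -- α is differentiable at t
  have hsq : HasDerivAt (fun s => a₂ s ^ 2) (a₂' t * a₂ t + a₂ t * a₂' t) t := by
    have := (ha₂ t ht).mul (ha₂ t ht)
    simpa [pow_two, Pi.mul_def] using this
  have hA : ∃ d, HasDerivAt (fun s => -(a₂' s / (2 * a₂ s ^ 2) + a₁ s / (2 * a₂ s))) d t := by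
    have d1 := (ha₂' t ht).div (hsq.const_mul (2 : ℂ))
      (mul_ne_zero two_ne_zero (pow_ne_zero 2 hne))
    have d2 := (ha₁ t ht).div ((ha₂ t ht).const_mul (2 : ℂ)) (by simp [hne])
    exact ⟨_, (d1.add d2).neg⟩
  obtain ⟨A', hA⟩ := hA
  have hαeq : α =ᶠ[nhds t] fun s => -(a₂' s / (2 * a₂ s ^ 2) + a₁ s / (2 * a₂ s)) :=
    Filter.eventuallyEq_of_mem hmem hα
  have hαd0 := hA.congr_of_eventuallyEq hαeq
  have hαd : HasDerivAt α (deriv α t) t := hαd0.differentiableAt.hasDerivAt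
  -- β is differentiable at t with derivative a₂'/a₂²
  have hB : HasDerivAt (fun s => -(1 / a₂ s)) (a₂' t / a₂ t ^ 2) t := by
    have := ((hasDerivAt_const t (1 : ℂ)).div (ha₂ t ht) hne).neg
    simpa [neg_div, neg_neg, Pi.div_def, Pi.neg_def] using this
  have hβd : HasDerivAt β (a₂' t / a₂ t ^ 2) t :=
    hB.congr_of_eventuallyEq (Filter.eventuallyEq_of_mem hmem hβ)
  -- v = α + β * w near t
  have hvd : HasDerivAt v
      (deriv α t + (a₂' t / a₂ t ^ 2 * w t + β t * (r t - w t ^ 2))) t := by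
    have : HasDerivAt (fun s => α s + β s * w s)
        (deriv α t + (a₂' t / a₂ t ^ 2 * w t + β t * (r t - w t ^ 2))) t :=
      hαd.add (hβd.mul (hw t ht))
    exact this.congr_of_eventuallyEq (Filter.eventuallyEq_of_mem hmem hv)
  convert hvd using 1
  have hβt : β t = -(1 / a₂ t) := hβ t ht
  have hβne : β t ≠ 0 := by rw [hβt]; simp [hne]
  have hβr : β t * r t = a₀ t + a₁ t * α t + a₂ t * α t ^ 2 - deriv α t := by
    rw [hr t ht, mul_comm, div_mul_cancel₀ _ hβne]
  have h1 : 2 * a₂ t ^ 2 * α t = -(a₂' t + a₁ t * a₂ t) := by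
    rw [hα t ht]; field_simp
  have h2 : a₂ t * β t = -1 := by rw [hβt]; field_simp
  have h3 : a₂ t ^ 2 * (a₂' t / a₂ t ^ 2) = a₂' t := by field_simp
  rw [hv t ht]
  apply mul_left_cancel₀ (pow_ne_zero 2 hne)
  linear_combination (-(a₂ t ^ 2)) * hβr + (a₂ t * β t * w t) * h1
    + (a₂ t ^ 2 * β t * w t ^ 2 - a₂' t * w t) * h2 + (-(w t)) * h3
end

section
/- Let T > 0 and let a, b, c : [0,T) → ℝ with a differentiable and nonvanishing and c differentiable. Suppose μ₀, μ₁ : [0,T) → ℝ are twice differentiable solutions of the characteristic equation μ'' − (a'/a)·μ' + (4ab + c·a'/a − c² − c')·μ = 0, with μ₀(0) = 0, μ₀'(0) = 2a(0) ≠ 0, μ₁(0) ≠ 0, μ₁'(0) = 0, and μ₀(t) ≠ 0 for all t ∈ (0,T). Then on (0,T) the functions α₀ = μ₀'/(4aμ₀) − c/(4a), β₀ = −1/μ₀, and γ₀ = μ₁/(2μ₁(0)·μ₀) + c(0)/(2a(0)) satisfy the Riccati-type system: α₀' + b + 2c·α₀ + 4a·α₀² = 0, β₀' + (c + 4a·α₀)·β₀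 = 0, and γ₀' + a·β₀² = 0. -/
open Set

/-- Lemma 1 of the paper: the fundamental solution `(α₀, β₀, γ₀)` of the
Riccati-type system in terms of the standard solutions `μ₀, μ₁` of the
characteristic equation `μ'' - (a'/a) μ' + (4ab + c a'/a - c² - c') μ = 0`. -/
theorem stmt_4 (T : ℝ) (hT : 0 < T)
    (a a' b c c' : ℝ → ℝ)
    (ha : ∀ t ∈ Ico (0 : ℝ) T, HasDerivWithinAt a (a' t) (Ico (0 : ℝ) T) t)
    (hane : ∀ t ∈ Ico (0 : ℝ) T, a t ≠ 0)
    (hc : ∀ t ∈ Ico (0 : ℝ) T, HasDerivWithinAt c (c' t) (Ico (0 : ℝ) T) t)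
    (μ₀ μ₀' μ₀'' μ₁ μ₁' μ₁'' : ℝ → ℝ)
    (hμ₀ : ∀ t ∈ Ico (0 : ℝ) T, HasDerivWithinAt μ₀ (μ₀' t) (Ico (0 : ℝ) T) t)
    (hμ₀' : ∀ t ∈ Ico (0 : ℝ) T, HasDerivWithinAt μ₀' (μ₀'' t) (Ico (0 : ℝ) T) t)
    (hμ₁ : ∀ t ∈ Ico (0 : ℝ) T, HasDerivWithinAt μ₁ (μ₁' t) (Ico (0 : ℝ) T) t)
    (hμ₁' : ∀ t ∈ Ico (0 : ℝ) T, HasDerivWithinAt μ₁' (μ₁'' t) (Ico (0 : ℝ) T) t)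
    (heq₀ : ∀ t ∈ Ico (0 : ℝ) T,
      μ₀'' t - (a' t / a t) * μ₀' t
        + (4 * a t * b t + c t * a' t / a t - c t ^ 2 - c' t) * μ₀ t = 0)
    (heq₁ : ∀ t ∈ Ico (0 : ℝ) T,
      μ₁'' t - (a' t / a t) * μ₁' t
        + (4 * a t * b t + c t * a' t / a t - c t ^ 2 - c' t) * μ₁ t = 0)
    (hμ₀0 : μ₀ 0 = 0) (hμ₀'0 : μ₀' 0 = 2 * a 0) (ha0 : a 0 ≠ 0)
    (hμ₁0 : μ₁ 0 ≠ 0) (hμ₁'0 : μ₁' 0 = 0)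
    (hμ₀ne : ∀ t ∈ Ioo (0 : ℝ) T, μ₀ t ≠ 0)
    (α₀ β₀ γ₀ : ℝ → ℝ)
    (hα₀ : ∀ t ∈ Ioo (0 : ℝ) T,
      α₀ t = μ₀' t / (4 * a t * μ₀ t) - c t / (4 * a t))
    (hβ₀ : ∀ t ∈ Ioo (0 : ℝ) T, β₀ t = -(1 / μ₀ t))
    (hγ₀ : ∀ t ∈ Ioo (0 : ℝ) T,
      γ₀ t = μ₁ t / (2 * μ₁ 0 * μ₀ t) + c 0 / (2 * a 0)) :
    ∀ t ∈ Ioo (0 : ℝ) T,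
      HasDerivAt α₀ (-(b t + 2 * c t * α₀ t + 4 * a t * α₀ t ^ 2)) t ∧
      HasDerivAt β₀ (-((c t + 4 * a t * α₀ t) * β₀ t)) t ∧
      HasDerivAt γ₀ (-(a t * β₀ t ^ 2)) t := by

  intro t ht
  have ht' : t ∈ Ico (0 : ℝ) T := Ioo_subset_Ico_self ht
  -- ODE rewritten without division
  have hODE : ∀ s ∈ Ico (0 : ℝ) T,
      a s * μ₀'' s = a' s * μ₀' s
        - (4 * (a s) ^ 2 * b s + c s * a' s - a s * (c s) ^ 2 - a s * c' s) * μ₀ s := by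
    intro s hs
    have h := heq₀ s hs
    have hA := hane s hs
    field_simp at h
    linarith [h]
  have hODE₁ : ∀ s ∈ Ico (0 : ℝ) T,
      a s * μ₁'' s = a' s * μ₁' s
        - (4 * (a s) ^ 2 * b s + c s * a' s - a s * (c s) ^ 2 - a s * c' s) * μ₁ s := by
    intro s hs
    have h := heq₁ s hs
    have hA := hane s hs
    field_simp at h
    linarith [h]
  -- Wronskian identity
  have hW : ∀ s ∈ Ico (0 : ℝ) T, μ₀' s * μ₁ s - μ₀ s * μ₁' s = 2 * μ₁ 0 * a s := by
    set f : ℝ → ℝ := fun s => (μ₀' s * μ₁ s - μ₀ s * μ₁' s) / a s with hf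
    have hfd : ∀ x ∈ Ico (0 : ℝ) T, HasDerivWithinAt f 0 (Ico (0 : ℝ) T) x := by
      intro x hx
      have hA := hane x hx
      have h1 := (((hμ₀' x hx).mul (hμ₁ x hx)).sub ((hμ₀ x hx).mul (hμ₁' x hx))).div
        (ha x hx) hA
      refine h1.congr_deriv ?_
      have h0 : μ₀'' x = (a' x * μ₀' x
          - (4 * (a x) ^ 2 * b x + c x * a' x - a x * (c x) ^ 2 - a x * c' x) * μ₀ x) / a x := by
        rw [eq_div_iff hA]; linarith [hODE x hx]
      have h2 : μ₁'' x = (a' x * μ₁' x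
          - (4 * (a x) ^ 2 * b x + c x * a' x - a x * (c x) ^ 2 - a x * c' x) * μ₁ x) / a x := by
        rw [eq_div_iff hA]; linarith [hODE₁ x hx]
      rw [h0, h2]
      simp only [Pi.sub_apply, Pi.mul_apply]
      field_simp
      ring
    have hcont : ContinuousOn f (Ico (0 : ℝ) T) := fun x hx => (hfd x hx).continuousWithinAt
    intro s hs
    have hfs : f s = f 0 := by
      rcases eq_or_lt_of_le hs.1 with h | h
      · rw [← h]
      · have h0T : (0 : ℝ) ∈ Ico (0 : ℝ) T := ⟨le_refl 0, lt_trans h hs.2⟩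
        have hsub : Icc (0 : ℝ) s ⊆ Ico (0 : ℝ) T := fun y hy => ⟨hy.1, lt_of_le_of_lt hy.2 hs.2⟩
        refine constant_of_has_deriv_right_zero (hcont.mono hsub) ?_ s (right_mem_Icc.mpr h.le)
        intro x hx
        have hx' : x ∈ Ico (0 : ℝ) T := ⟨hx.1, lt_of_lt_of_le hx.2 (le_of_lt hs.2)⟩
        exact (hfd x hx').mono_of_mem_nhdsWithin (Ico_mem_nhdsGE_of_mem hx')
    have hf0 : f 0 = 2 * μ₁ 0 := by
      rw [hf]; simp only [hμ₀0, hμ₀'0, hμ₁'0]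
      field_simp
      ring
    have hAs := hane s hs
    have : (μ₀' s * μ₁ s - μ₀ s * μ₁' s) / a s = 2 * μ₁ 0 := by rw [← hf0, ← hfs]
    field_simp at this
    linarith [this]
  -- derivatives at t
  have hmem : Ico (0 : ℝ) T ∈ nhds t :=
    Filter.mem_of_superset (isOpen_Ioo.mem_nhds ht) Ioo_subset_Ico_self
  have haD : HasDerivAt a (a' t) t := (ha t ht').hasDerivAt hmem
  have hcD : HasDerivAt c (c' t) t := (hc t ht').hasDerivAt hmem
  have hMD : HasDerivAt μ₀ (μ₀' t) t := (hμ₀ t ht').hasDerivAt hmem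
  have hM'D : HasDerivAt μ₀' (μ₀'' t) t := (hμ₀' t ht').hasDerivAt hmem
  have hND : HasDerivAt μ₁ (μ₁' t) t := (hμ₁ t ht').hasDerivAt hmem
  have hAne : a t ≠ 0 := hane t ht'
  have hMne : μ₀ t ≠ 0 := hμ₀ne t ht
  have hevIoo : Ioo (0 : ℝ) T ∈ nhds t := isOpen_Ioo.mem_nhds ht
  have hODEt := hODE t ht'
  have hWt := hW t ht'
  refine ⟨?_, ?_, ?_⟩
  · -- α₀
    have hden : HasDerivAt (fun s => 4 * a s * μ₀ s)
        (4 * a' t * μ₀ t + 4 * a t * μ₀' t) t := by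
      simpa [mul_assoc, Pi.mul_def] using ((haD.const_mul 4).mul hMD)
    have hdenne : 4 * a t * μ₀ t ≠ 0 := by positivity
    have hden2 : HasDerivAt (fun s => 4 * a s) (4 * a' t) t := haD.const_mul 4
    have hden2ne : 4 * a t ≠ 0 := by positivity
    have hF : HasDerivAt (fun s => μ₀' s / (4 * a s * μ₀ s) - c s / (4 * a s))
        ((μ₀'' t * (4 * a t * μ₀ t) - μ₀' t * (4 * a' t * μ₀ t + 4 * a t * μ₀' t)) /
          (4 * a t * μ₀ t) ^ 2 -
         (c' t * (4 * a t) - c t * (4 * a' t)) / (4 * a t) ^ 2) t :=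
      (hM'D.div hden hdenne).sub (hcD.div hden2 hden2ne)
    have hFα : HasDerivAt α₀
        ((μ₀'' t * (4 * a t * μ₀ t) - μ₀' t * (4 * a' t * μ₀ t + 4 * a t * μ₀' t)) /
          (4 * a t * μ₀ t) ^ 2 -
         (c' t * (4 * a t) - c t * (4 * a' t)) / (4 * a t) ^ 2) t := by
      refine hF.congr_of_eventuallyEq ?_
      filter_upwards [hevIoo] with s hs using hα₀ s hs
    convert hFα using 1
    have hM'' : μ₀'' t = (a' t * μ₀' t
        - (4 * (a t) ^ 2 * b t + c t * a' t - a t * (c t) ^ 2 - a t * c' t) * μ₀ t) / a t := by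
      rw [eq_div_iff hAne]; linarith [hODEt]
    rw [hα₀ t ht, hM'']
    field_simp
    ring
  · -- β₀
    have hF : HasDerivAt (fun s => -(1 / μ₀ s)) (μ₀' t / μ₀ t ^ 2) t := by
      have h := (hMD.inv hMne).neg
      simp only [one_div]
      refine h.congr_deriv ?_
      ring
    have hFβ : HasDerivAt β₀ (μ₀' t / μ₀ t ^ 2) t := by
      refine hF.congr_of_eventuallyEq ?_
      filter_upwards [hevIoo] with s hs using hβ₀ s hs
    convert hFβ using 1
    rw [hα₀ t ht, hβ₀ t ht]
    field_simp
    ring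
  · -- γ₀
    have hden : HasDerivAt (fun s => 2 * μ₁ 0 * μ₀ s) (2 * μ₁ 0 * μ₀' t) t :=
      hMD.const_mul (2 * μ₁ 0)
    have hdenne : 2 * μ₁ 0 * μ₀ t ≠ 0 := by positivity
    have hF : HasDerivAt (fun s => μ₁ s / (2 * μ₁ 0 * μ₀ s) + c 0 / (2 * a 0))
        ((μ₁' t * (2 * μ₁ 0 * μ₀ t) - μ₁ t * (2 * μ₁ 0 * μ₀' t)) /
          (2 * μ₁ 0 * μ₀ t) ^ 2) t :=
      (hND.div hden hdenne).add_const _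
    have hFγ : HasDerivAt γ₀
        ((μ₁' t * (2 * μ₁ 0 * μ₀ t) - μ₁ t * (2 * μ₁ 0 * μ₀' t)) /
          (2 * μ₁ 0 * μ₀ t) ^ 2) t := by
      refine hF.congr_of_eventuallyEq ?_
      filter_upwards [hevIoo] with s hs using hγ₀ s hs
    convert hFγ using 1
    have hN' : μ₁' t = (μ₀' t * μ₁ t - 2 * μ₁ 0 * a t) / μ₀ t := by
      rw [eq_div_iff hMne]; linarith [hWt]
    rw [hβ₀ t ht, hN']
    field_simp
    ring
end

section
/- Let I ⊆ ℝ be an open interval, let a, b, c : I → ℝ be continuous with c differentiable, and let α, β, γ : I → ℂ be differentiable functions satisfying the Riccati-type system α' + b + 2c·α + 4a·α² = 0, β' + (c + 4a·α)·β = 0, γ' + a·β² = 0 on I. Let μ₀ : I → ℂ be differentiable and nonvanishing with μ₀'/μ₀ = 4a·α + c on I, and let ν : I → ℂ be differentiable with ν(t)²·(2πi·μ₀(t)) = 1 for all t ∈ I. Then the function G(x,y,t) = ν(t)·exp(i(α(t)x² + β(t)xy + γ(t)y²)) satisfies, for all x, y ∈ ℝ and t ∈ I, the Schrödinger equation i·∂ₜG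 = −a(t)·∂ₓ²G + b(t)·x²·G − i·c(t)·x·∂ₓG − i·(c(t)/2)·G. -/
open Complex

/-- Lemma 2 of the paper: the Green function
`G(x,y,t) = (2πiμ₀(t))^{-1/2} e^{i(α x² + β xy + γ y²)}` built from a solution
`(α, β, γ)` of the Riccati-type system satisfies the linear Schrödinger
equation `i ∂ₜG = -a ∂ₓ²G + b x² G - i c x ∂ₓG - i (c/2) G`. -/
theorem stmt_6 (I : Set ℝ) (hI : IsOpen I) (hIconn : I.OrdConnected)
    (a b c : ℝ → ℝ)
    (hacont : ContinuousOn a I) (hbcont : ContinuousOn b I)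
    (hccont : ContinuousOn c I)
    (hcdiff : ∀ t ∈ I, DifferentiableAt ℝ c t)
    (α α' β β' γ γ' : ℝ → ℂ)
    (hα : ∀ t ∈ I, HasDerivAt α (α' t) t)
    (hβ : ∀ t ∈ I, HasDerivAt β (β' t) t)
    (hγ : ∀ t ∈ I, HasDerivAt γ (γ' t) t)
    (hsys₁ : ∀ t ∈ I, α' t + (b t : ℂ) + 2 * (c t : ℂ) * α t
      + 4 * (a t : ℂ) * α t ^ 2 = 0)
    (hsys₂ : ∀ t ∈ I, β' t + ((c t : ℂ) + 4 * (a t : ℂ) * α t) * β t = 0)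
    (hsys₃ : ∀ t ∈ I, γ' t + (a t : ℂ) * β t ^ 2 = 0)
    (μ₀ μ₀' : ℝ → ℂ)
    (hμ₀ : ∀ t ∈ I, HasDerivAt μ₀ (μ₀' t) t)
    (hμ₀ne : ∀ t ∈ I, μ₀ t ≠ 0)
    (hlog : ∀ t ∈ I, μ₀' t / μ₀ t = 4 * (a t : ℂ) * α t + (c t : ℂ))
    (ν ν' : ℝ → ℂ)
    (hν : ∀ t ∈ I, HasDerivAt ν (ν' t) t)
    (hν2 : ∀ t ∈ I, ν t ^ 2 * (2 * (Real.pi : ℂ) * Complex.I * μ₀ t) = 1)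
    (G : ℝ → ℝ → ℝ → ℂ)
    (hG : ∀ (x y t : ℝ), G x y t =
      ν t * Complex.exp (Complex.I *
        (α t * (x : ℂ) ^ 2 + β t * ((x : ℂ) * (y : ℂ)) + γ t * (y : ℂ) ^ 2))) :
    ∀ (x y : ℝ), ∀ t ∈ I,
      Complex.I * deriv (fun s : ℝ => G x y s) t =
        -(a t : ℂ) * deriv (fun u : ℝ => deriv (fun u' : ℝ => G u' y t) u) x
          + (b t : ℂ) * (x : ℂ) ^ 2 * G x y t
          - Complex.I * (c t : ℂ) * (x : ℂ) * deriv (fun u : ℝ => G u y t) x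
          - Complex.I * ((c t : ℂ) / 2) * G x y t := by
  intro x y t ht
  have hA := hα t ht
  have hB := hβ t ht
  have hC := hγ t ht
  have hN := hν t ht
  have hM := hμ₀ t ht
  have hν0 : ν t ≠ 0 := by
    intro h
    have h1 := hν2 t ht
    rw [h] at h1
    simp at h1
  have hK : (2 * (Real.pi : ℂ) * Complex.I * μ₀ t) ≠ 0 := by
    have h1 := hμ₀ne t ht
    have h2 : ((Real.pi : ℂ)) ≠ 0 := by
      exact_mod_cast Real.pi_ne_zero
    exact mul_ne_zero (mul_ne_zero (mul_ne_zero two_ne_zero h2) Complex.I_ne_zero) h1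
  have hM' : μ₀' t = (4 * (a t : ℂ) * α t + (c t : ℂ)) * μ₀ t :=
    (div_eq_iff (hμ₀ne t ht)).mp (hlog t ht)
  have hconst : (fun s => ν s * ν s * (2 * (Real.pi : ℂ) * Complex.I * μ₀ s)) =ᶠ[nhds t]
      fun _ => (1 : ℂ) := by
    filter_upwards [hI.mem_nhds ht] with s hs
    have h1 := hν2 s hs
    linear_combination h1
  have h0 : HasDerivAt (fun s => ν s * ν s * (2 * (Real.pi : ℂ) * Complex.I * μ₀ s)) 0 t :=
    (hasDerivAt_const t (1 : ℂ)).congr_of_eventuallyEq hconst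
  have hd : HasDerivAt (fun s => ν s * ν s * (2 * (Real.pi : ℂ) * Complex.I * μ₀ s))
      ((2 * ν t * ν' t) * (2 * (Real.pi : ℂ) * Complex.I * μ₀ t)
        + ν t ^ 2 * (2 * (Real.pi : ℂ) * Complex.I * μ₀' t)) t := by
    have h1 := (hN.mul hN).mul (hM.const_mul (2 * (Real.pi : ℂ) * Complex.I))
    exact h1.congr_deriv (by simp only [Pi.mul_apply]; ring)
  have heq := hd.unique h0
  have hN' : ν' t = -(ν t) * (4 * (a t : ℂ) * α t + (c t : ℂ)) / 2 := by
    have h2 : (ν t * (2 * (Real.pi : ℂ) * Complex.I * μ₀ t)) *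
        (2 * ν' t + ν t * (4 * (a t : ℂ) * α t + (c t : ℂ))) = 0 := by
      linear_combination heq - (2 * (Real.pi : ℂ) * Complex.I * ν t ^ 2) * hM'
    rcases mul_eq_zero.mp h2 with h | h
    · exact absurd h (mul_ne_zero hν0 hK)
    · linear_combination h / 2
  have hA' : α' t = -((b t : ℂ) + 2 * (c t : ℂ) * α t + 4 * (a t : ℂ) * α t ^ 2) := by
    linear_combination hsys₁ t ht
  have hB' : β' t = -(((c t : ℂ) + 4 * (a t : ℂ) * α t) * β t) := by
    linear_combination hsys₂ t ht
  have hC' : γ' t = -((a t : ℂ) * β t ^ 2) := by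
    linear_combination hsys₃ t ht
  -- time derivative
  have hinner_t : HasDerivAt (fun s : ℝ => Complex.I *
      (α s * (x : ℂ) ^ 2 + β s * ((x : ℂ) * (y : ℂ)) + γ s * (y : ℂ) ^ 2))
      (Complex.I * (α' t * (x : ℂ) ^ 2 + β' t * ((x : ℂ) * (y : ℂ)) + γ' t * (y : ℂ) ^ 2)) t :=
    (((hA.mul_const _).add (hB.mul_const _)).add (hC.mul_const _)).const_mul Complex.I
  have hft : HasDerivAt (fun s : ℝ => ν s * Complex.exp (Complex.I *
        (α s * (x : ℂ) ^ 2 + β s * ((x : ℂ) * (y : ℂ)) + γ s * (y : ℂ) ^ 2)))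
      (ν' t * Complex.exp (Complex.I *
        (α t * (x : ℂ) ^ 2 + β t * ((x : ℂ) * (y : ℂ)) + γ t * (y : ℂ) ^ 2))
       + ν t * (Complex.exp (Complex.I *
        (α t * (x : ℂ) ^ 2 + β t * ((x : ℂ) * (y : ℂ)) + γ t * (y : ℂ) ^ 2))
        * (Complex.I * (α' t * (x : ℂ) ^ 2 + β' t * ((x : ℂ) * (y : ℂ)) + γ' t * (y : ℂ) ^ 2)))) t :=
    hN.mul hinner_t.cexp
  -- space derivatives
  have hinner_x : ∀ u : ℝ, HasDerivAt (fun u' : ℝ => Complex.I *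
      (α t * (u' : ℂ) ^ 2 + β t * ((u' : ℂ) * (y : ℂ)) + γ t * (y : ℂ) ^ 2))
      (Complex.I * (α t * (2 * (u : ℂ)) + β t * (y : ℂ))) u := by
    intro u
    have hu : HasDerivAt (fun u' : ℝ => ((u' : ℝ) : ℂ)) 1 u := by
      simpa using (hasDerivAt_id u).ofReal_comp
    have h1 : HasDerivAt (fun u' : ℝ => α t * (u' : ℂ) ^ 2) (α t * (2 * (u : ℂ))) u := by
      have heqf : (fun u' : ℝ => α t * (u' : ℂ) ^ 2)
          = fun u' : ℝ => α t * ((u' : ℂ) * (u' : ℂ)) := by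
        funext v
        ring
      rw [heqf]
      have := (hu.mul hu).const_mul (α t)
      exact this.congr_deriv (by ring)
    have h2 : HasDerivAt (fun u' : ℝ => β t * ((u' : ℂ) * (y : ℂ))) (β t * (y : ℂ)) u := by
      have := (hu.mul_const ((y : ℝ) : ℂ)).const_mul (β t)
      exact this.congr_deriv (by ring)
    have h3 : HasDerivAt (fun _ : ℝ => γ t * (y : ℂ) ^ 2) 0 u := hasDerivAt_const _ _
    have h4 := ((h1.add h2).add h3).const_mul Complex.I
    exact h4.congr_deriv (by ring)
  have hfx : ∀ u : ℝ, HasDerivAt (fun u' : ℝ => ν t * Complex.exp (Complex.I *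
        (α t * (u' : ℂ) ^ 2 + β t * ((u' : ℂ) * (y : ℂ)) + γ t * (y : ℂ) ^ 2)))
      (ν t * (Complex.exp (Complex.I *
        (α t * (u : ℂ) ^ 2 + β t * ((u : ℂ) * (y : ℂ)) + γ t * (y : ℂ) ^ 2))
        * (Complex.I * (α t * (2 * (u : ℂ)) + β t * (y : ℂ))))) u :=
    fun u => ((hinner_x u).cexp).const_mul (ν t)
  have hrw : (fun u : ℝ => deriv (fun u' : ℝ => ν t * Complex.exp (Complex.I *
        (α t * (u' : ℂ) ^ 2 + β t * ((u' : ℂ) * (y : ℂ)) + γ t * (y : ℂ) ^ 2))) u)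
      = fun u : ℝ => ν t * (Complex.exp (Complex.I *
        (α t * (u : ℂ) ^ 2 + β t * ((u : ℂ) * (y : ℂ)) + γ t * (y : ℂ) ^ 2))
        * (Complex.I * (α t * (2 * (u : ℂ)) + β t * (y : ℂ)))) :=
    funext fun u => (hfx u).deriv
  have hu : HasDerivAt (fun u' : ℝ => ((u' : ℝ) : ℂ)) 1 x := by
    simpa using (hasDerivAt_id x).ofReal_comp
  have hlin : HasDerivAt (fun u : ℝ => Complex.I * (α t * (2 * (u : ℂ)) + β t * (y : ℂ)))
      (Complex.I * (α t * 2)) x := by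
    have h1 : HasDerivAt (fun u : ℝ => α t * (2 * (u : ℂ))) (α t * 2) x := by
      have := (hu.const_mul (2 : ℂ)).const_mul (α t)
      exact this.congr_deriv (by ring)
    have h2 : HasDerivAt (fun _ : ℝ => β t * (y : ℂ)) 0 x := hasDerivAt_const _ _
    have h3 := (h1.add h2).const_mul Complex.I
    exact h3.congr_deriv (by ring)
  have hsecond : HasDerivAt (fun u : ℝ => ν t * (Complex.exp (Complex.I *
        (α t * (u : ℂ) ^ 2 + β t * ((u : ℂ) * (y : ℂ)) + γ t * (y : ℂ) ^ 2))
        * (Complex.I * (α t * (2 * (u : ℂ)) + β t * (y : ℂ)))))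
      (ν t * (Complex.exp (Complex.I *
        (α t * (x : ℂ) ^ 2 + β t * ((x : ℂ) * (y : ℂ)) + γ t * (y : ℂ) ^ 2))
        * ((Complex.I * (α t * (2 * (x : ℂ)) + β t * (y : ℂ)))
            * (Complex.I * (α t * (2 * (x : ℂ)) + β t * (y : ℂ)))
          + Complex.I * (α t * 2)))) x := by
    have h1 := (((hinner_x x).cexp).mul hlin).const_mul (ν t)
    exact h1.congr_deriv (by ring)
  simp only [hG]
  rw [hft.deriv, hrw, hsecond.deriv, (hfx x).deriv, hN', hA', hB', hC']
  linear_combination (-(ν t * (x : ℂ) ^ 2 * Complex.exp (Complex.I *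
    (α t * (x : ℂ) ^ 2 + β t * ((x : ℂ) * (y : ℂ)) + γ t * (y : ℂ) ^ 2)) * (b t : ℂ)))
    * Complex.I_sq
end

section
/- Let λ, ω ∈ ℝ with ω ≠ 0, and let C₁, C₂ ∈ ℂ. Then the function μ(t) = C₁·e^{λt}·(sin(ωt) + cos(ωt)) + C₂·e^{−λt}·(sin(ωt) − cos(ωt)) satisfies Ince's equation ∂ₜ²μ + (2λω·sin(2ωt)/(ω + λ·cos(2ωt)))·∂ₜμ + ((ω³ − 3ωλ² − (ω²λ + λ³)·cos(2ωt))/(ω + λ·cos(2ωt)))·μ = 0 at every t ∈ ℝ with ω + λ·cos(2ωt) ≠ 0. -/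
open Real

lemma expSC_hasDerivAt (a b : ℝ) (p q : ℂ) (t : ℝ) :
    HasDerivAt (fun t : ℝ => (Real.exp (a * t) : ℂ) *
        (p * (Real.sin (b * t) : ℂ) + q * (Real.cos (b * t) : ℂ)))
      ((Real.exp (a * t) : ℂ) *
        (((a : ℂ) * p - (b : ℂ) * q) * (Real.sin (b * t) : ℂ)
          + ((a : ℂ) * q + (b : ℂ) * p) * (Real.cos (b * t) : ℂ))) t := by
  have he : HasDerivAt (fun t : ℝ => (Real.exp (a * t) : ℂ))
      ((a : ℂ) * (Real.exp (a * t) : ℂ)) t := by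
    have := (((hasDerivAt_id t).const_mul a).exp).ofReal_comp
    convert this using 1
    simp only [id_eq]
    push_cast
    simp only [id]
    ring
  have hs : HasDerivAt (fun t : ℝ => (Real.sin (b * t) : ℂ))
      ((b : ℂ) * (Real.cos (b * t) : ℂ)) t := by
    have := (((hasDerivAt_id t).const_mul b).sin).ofReal_comp
    convert this using 1
    simp only [id_eq]
    push_cast
    simp only [id]
    ring
  have hc : HasDerivAt (fun t : ℝ => (Real.cos (b * t) : ℂ))
      (-((b : ℂ) * (Real.sin (b * t) : ℂ))) t := by
    have := (((hasDerivAt_id t).const_mul b).cos).ofReal_comp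
    convert this using 1
    simp only [id_eq]
    push_cast
    simp only [id]
    ring
  have h := he.mul ((hs.const_mul p).add (hc.const_mul q))
  refine h.congr_deriv ?_
  simp only [Pi.add_apply]
  push_cast
  ring

/-- The general solution of Ince's equation (the characteristic equation of
the degenerate parametric oscillator):
`μ(t) = C₁ e^{λt}(sin ωt + cos ωt) + C₂ e^{-λt}(sin ωt - cos ωt)`. -/
theorem stmt_7 (lam ω : ℝ) (hω : ω ≠ 0) (C₁ C₂ : ℂ)
    (μ : ℝ → ℂ)
    (hμ : ∀ t : ℝ, μ t =
      C₁ * Real.exp (lam * t) * ((Real.sin (ω * t) : ℂ) + (Real.cos (ω * t) : ℂ))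
      + C₂ * Real.exp (-(lam * t)) * ((Real.sin (ω * t) : ℂ) - (Real.cos (ω * t) : ℂ))) :
    ∀ t : ℝ, ω + lam * Real.cos (2 * ω * t) ≠ 0 →
      deriv (deriv μ) t
        + ((2 * lam * ω * Real.sin (2 * ω * t)
            / (ω + lam * Real.cos (2 * ω * t)) : ℝ) : ℂ) * deriv μ t
        + (((ω ^ 3 - 3 * ω * lam ^ 2
              - (ω ^ 2 * lam + lam ^ 3) * Real.cos (2 * ω * t))
            / (ω + lam * Real.cos (2 * ω * t)) : ℝ) : ℂ) * μ t = 0 := by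
  -- rewrite μ in a standard form
  have hμ' : μ = fun t : ℝ =>
      (Real.exp (lam * t) : ℂ) * (C₁ * (Real.sin (ω * t) : ℂ) + C₁ * (Real.cos (ω * t) : ℂ))
      + (Real.exp (-lam * t) : ℂ) *
          (C₂ * (Real.sin (ω * t) : ℂ) + (-C₂) * (Real.cos (ω * t) : ℂ)) := by
    funext t
    rw [hμ t]
    rw [show -lam * t = -(lam * t) by ring]
    ring
  have h1 : ∀ t : ℝ, HasDerivAt μ
      ((Real.exp (lam * t) : ℂ) *
        (((lam : ℂ) * C₁ - (ω : ℂ) * C₁) * (Real.sin (ω * t) : ℂ)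
          + ((lam : ℂ) * C₁ + (ω : ℂ) * C₁) * (Real.cos (ω * t) : ℂ))
      + (Real.exp (-lam * t) : ℂ) *
        ((((-lam : ℝ) : ℂ) * C₂ - (ω : ℂ) * (-C₂)) * (Real.sin (ω * t) : ℂ)
          + (((-lam : ℝ) : ℂ) * (-C₂) + (ω : ℂ) * C₂) * (Real.cos (ω * t) : ℂ))) t := by
    intro t
    rw [hμ']
    exact (expSC_hasDerivAt lam ω C₁ C₁ t).add (expSC_hasDerivAt (-lam) ω C₂ (-C₂) t)
  have hd1 : deriv μ = fun t : ℝ =>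
      (Real.exp (lam * t) : ℂ) *
        (((lam : ℂ) * C₁ - (ω : ℂ) * C₁) * (Real.sin (ω * t) : ℂ)
          + ((lam : ℂ) * C₁ + (ω : ℂ) * C₁) * (Real.cos (ω * t) : ℂ))
      + (Real.exp (-lam * t) : ℂ) *
        ((((-lam : ℝ) : ℂ) * C₂ - (ω : ℂ) * (-C₂)) * (Real.sin (ω * t) : ℂ)
          + (((-lam : ℝ) : ℂ) * (-C₂) + (ω : ℂ) * C₂) * (Real.cos (ω * t) : ℂ)) :=
    funext fun t => (h1 t).deriv
  set P1 : ℂ := (lam : ℂ) * C₁ - (ω : ℂ) * C₁ with hP1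
  set Q1 : ℂ := (lam : ℂ) * C₁ + (ω : ℂ) * C₁ with hQ1
  set P2 : ℂ := ((-lam : ℝ) : ℂ) * C₂ - (ω : ℂ) * (-C₂) with hP2
  set Q2 : ℂ := ((-lam : ℝ) : ℂ) * (-C₂) + (ω : ℂ) * C₂ with hQ2
  have h2 : ∀ t : ℝ, HasDerivAt (deriv μ)
      ((Real.exp (lam * t) : ℂ) *
        (((lam : ℂ) * P1 - (ω : ℂ) * Q1) * (Real.sin (ω * t) : ℂ)
          + ((lam : ℂ) * Q1 + (ω : ℂ) * P1) * (Real.cos (ω * t) : ℂ))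
      + (Real.exp (-lam * t) : ℂ) *
        ((((-lam : ℝ) : ℂ) * P2 - (ω : ℂ) * Q2) * (Real.sin (ω * t) : ℂ)
          + (((-lam : ℝ) : ℂ) * Q2 + (ω : ℂ) * P2) * (Real.cos (ω * t) : ℂ))) t := by
    intro t
    rw [hd1]
    exact (expSC_hasDerivAt lam ω P1 Q1 t).add (expSC_hasDerivAt (-lam) ω P2 Q2 t)
  intro t ht
  rw [(h2 t).deriv, hd1, hμ']
  have hsc : ((Real.sin (ω * t) : ℝ) : ℂ) ^ 2 + ((Real.cos (ω * t) : ℝ) : ℂ) ^ 2 = 1 := by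
    have := Real.sin_sq_add_cos_sq (ω * t)
    exact_mod_cast congrArg (fun x : ℝ => (x : ℂ)) this
  have hcos2 : Real.cos (2 * ω * t) = Real.cos (ω * t) ^ 2 - Real.sin (ω * t) ^ 2 := by
    rw [show 2 * ω * t = 2 * (ω * t) by ring, Real.cos_two_mul', ]
  have hsin2 : Real.sin (2 * ω * t) = 2 * Real.sin (ω * t) * Real.cos (ω * t) := by
    rw [show 2 * ω * t = 2 * (ω * t) by ring, Real.sin_two_mul]
  have htC : ((ω : ℂ) + (lam : ℂ) * ((Real.cos (ω * t) : ℂ) ^ 2 - (Real.sin (ω * t) : ℂ) ^ 2)) ≠ 0 := by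
    intro h
    apply ht
    rw [hcos2]
    exact_mod_cast congrArg Complex.re h
  rw [hcos2, hsin2, hP1, hQ1, hP2, hQ2]
  push_cast at hsc htC ⊢
  rw [mul_comm (ω:ℂ) (t:ℂ)] at htC ⊢
  field_simp
  push_cast
  rw [mul_comm (t:ℂ) (ω:ℂ)]
  linear_combination (2 * (lam : ℂ) * (ω : ℂ) *
      (Complex.exp ((lam:ℂ) * (t:ℂ)) * C₁ *
          (((lam : ℂ) - ω) * Complex.cos ((ω:ℂ)*(t:ℂ)) + ((lam : ℂ) + ω) * Complex.sin ((ω:ℂ)*(t:ℂ)))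
        + Complex.exp (-((lam:ℂ) * (t:ℂ))) * C₂ *
          (((ω : ℂ) - lam) * Complex.cos ((ω:ℂ)*(t:ℂ)) + ((ω : ℂ) + lam) * Complex.sin ((ω:ℂ)*(t:ℂ))))) * hsc
end

section
/- Let λ, ω ∈ ℝ with ω ≠ 0. Define μ₀(t) = sin(ωt)·cosh(λt) + cos(ωt)·sinh(λt) and μ₁(t) = sin(ωt)·sinh(λt) + cos(ωt)·cosh(λt). Then: (i) both μ₀ and μ₁ satisfy Ince's equation ∂ₜ²μ + (2λω·sin(2ωt)/(ω + λ·cos(2ωt)))·∂ₜμ + ((ω³ − 3ωλ² − (ω²λ + λ³)·cos(2ωt))/(ω + λ·cos(2ωt)))·μ = 0 at every t with ω + λ·cos(2ωt) ≠ 0; and (ii) μ₀(0) = 0, μ₀'(0) = ω + λ, μ₁(0) = 1, μ₁'(0) = 0. -/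
private lemma hd_sin (ω t : ℝ) : HasDerivAt (fun t => Real.sin (ω * t)) (ω * Real.cos (ω * t)) t := by
  have h := (Real.hasDerivAt_sin (ω * t)).comp t ((hasDerivAt_id t).const_mul ω)
  simpa [mul_comm, Function.comp_def] using h

private lemma hd_cos (ω t : ℝ) : HasDerivAt (fun t => Real.cos (ω * t)) (-(ω * Real.sin (ω * t))) t := by
  have h := (Real.hasDerivAt_cos (ω * t)).comp t ((hasDerivAt_id t).const_mul ω)
  simpa [mul_comm, Function.comp_def] using h

private lemma ince_d1 (lam ω : ℝ) (f g μ : ℝ → ℝ)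
    (hf : ∀ t, HasDerivAt f (lam * g t) t) (hg : ∀ t, HasDerivAt g (lam * f t) t)
    (hμ : ∀ t, μ t = Real.sin (ω * t) * f t + Real.cos (ω * t) * g t) (t : ℝ) :
    HasDerivAt μ ((ω + lam) * (Real.cos (ω * t) * f t)
      + (lam - ω) * (Real.sin (ω * t) * g t)) t := by
  have hμ' : μ = fun t => Real.sin (ω * t) * f t + Real.cos (ω * t) * g t := funext hμ
  rw [hμ']
  have h := ((hd_sin ω t).mul (hf t)).add ((hd_cos ω t).mul (hg t))
  exact h.congr_deriv (by ring)

private lemma ince_deriv1 (lam ω : ℝ) (f g μ : ℝ → ℝ)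
    (hf : ∀ t, HasDerivAt f (lam * g t) t) (hg : ∀ t, HasDerivAt g (lam * f t) t)
    (hμ : ∀ t, μ t = Real.sin (ω * t) * f t + Real.cos (ω * t) * g t) :
    deriv μ = fun t => (ω + lam) * (Real.cos (ω * t) * f t)
      + (lam - ω) * (Real.sin (ω * t) * g t) := by
  funext t
  exact (ince_d1 lam ω f g μ hf hg hμ t).deriv

private lemma ince_d2 (lam ω : ℝ) (f g μ : ℝ → ℝ)
    (hf : ∀ t, HasDerivAt f (lam * g t) t) (hg : ∀ t, HasDerivAt g (lam * f t) t)
    (hμ : ∀ t, μ t = Real.sin (ω * t) * f t + Real.cos (ω * t) * g t) (t : ℝ) :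
    HasDerivAt (deriv μ) ((lam ^ 2 - 2 * lam * ω - ω ^ 2) * (Real.sin (ω * t) * f t)
      + (lam ^ 2 + 2 * lam * ω - ω ^ 2) * (Real.cos (ω * t) * g t)) t := by
  rw [ince_deriv1 lam ω f g μ hf hg hμ]
  have h := (((hd_cos ω t).mul (hf t)).const_mul (ω + lam)).add
    (((hd_sin ω t).mul (hg t)).const_mul (lam - ω))
  exact h.congr_deriv (by ring)

private lemma ince_eq (lam ω : ℝ) (f g μ : ℝ → ℝ)
    (hf : ∀ t, HasDerivAt f (lam * g t) t) (hg : ∀ t, HasDerivAt g (lam * f t) t)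
    (hμ : ∀ t, μ t = Real.sin (ω * t) * f t + Real.cos (ω * t) * g t)
    (t : ℝ) (hD : ω + lam * Real.cos (2 * ω * t) ≠ 0) :
    deriv (deriv μ) t
      + (2 * lam * ω * Real.sin (2 * ω * t)
          / (ω + lam * Real.cos (2 * ω * t))) * deriv μ t
      + ((ω ^ 3 - 3 * ω * lam ^ 2
            - (ω ^ 2 * lam + lam ^ 3) * Real.cos (2 * ω * t))
          / (ω + lam * Real.cos (2 * ω * t))) * μ t = 0 := by
  have h1 : deriv μ t = (ω + lam) * (Real.cos (ω * t) * f t)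
      + (lam - ω) * (Real.sin (ω * t) * g t) := (ince_d1 lam ω f g μ hf hg hμ t).deriv
  have h2 : deriv (deriv μ) t = (lam ^ 2 - 2 * lam * ω - ω ^ 2) * (Real.sin (ω * t) * f t)
      + (lam ^ 2 + 2 * lam * ω - ω ^ 2) * (Real.cos (ω * t) * g t) :=
    (ince_d2 lam ω f g μ hf hg hμ t).deriv
  have hs2 : Real.sin (2 * ω * t) = 2 * Real.sin (ω * t) * Real.cos (ω * t) := by
    rw [show 2 * ω * t = 2 * (ω * t) by ring, Real.sin_two_mul]
  have hc2 : Real.cos (2 * ω * t) = 2 * Real.cos (ω * t) ^ 2 - 1 := by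
    rw [show 2 * ω * t = 2 * (ω * t) by ring, Real.cos_two_mul]
  have hpy := Real.sin_sq_add_cos_sq (ω * t)
  rw [h1, h2, hμ t, hs2, hc2]
  rw [hc2] at hD
  field_simp
  linear_combination (4 * lam * ω * (lam - ω) * Real.cos (ω * t) * g t) * hpy

/-- The standard solutions `μ₀, μ₁` of Ince's equation:
`μ₀(t) = sin ωt cosh λt + cos ωt sinh λt`,
`μ₁(t) = sin ωt sinh λt + cos ωt cosh λt`,
with initial data `μ₀(0) = 0`, `μ₀'(0) = ω + λ`, `μ₁(0) = 1`, `μ₁'(0) = 0`. -/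
theorem stmt_8 (lam ω : ℝ) (hω : ω ≠ 0)
    (μ₀ μ₁ : ℝ → ℝ)
    (hμ₀ : ∀ t : ℝ, μ₀ t =
      Real.sin (ω * t) * Real.cosh (lam * t) + Real.cos (ω * t) * Real.sinh (lam * t))
    (hμ₁ : ∀ t : ℝ, μ₁ t =
      Real.sin (ω * t) * Real.sinh (lam * t) + Real.cos (ω * t) * Real.cosh (lam * t)) :
    (∀ μ : ℝ → ℝ, (μ = μ₀ ∨ μ = μ₁) →
      ∀ t : ℝ, ω + lam * Real.cos (2 * ω * t) ≠ 0 →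
        deriv (deriv μ) t
          + (2 * lam * ω * Real.sin (2 * ω * t)
              / (ω + lam * Real.cos (2 * ω * t))) * deriv μ t
          + ((ω ^ 3 - 3 * ω * lam ^ 2
                - (ω ^ 2 * lam + lam ^ 3) * Real.cos (2 * ω * t))
              / (ω + lam * Real.cos (2 * ω * t))) * μ t = 0) ∧
    μ₀ 0 = 0 ∧ deriv μ₀ 0 = ω + lam ∧ μ₁ 0 = 1 ∧ deriv μ₁ 0 = 0 := by
  have hch : ∀ t : ℝ, HasDerivAt (fun t => Real.cosh (lam * t)) (lam * Real.sinh (lam * t)) t := by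
    intro t
    have h := (Real.hasDerivAt_cosh (lam * t)).comp t ((hasDerivAt_id t).const_mul lam)
    simpa [mul_comm, Function.comp_def] using h
  have hsh : ∀ t : ℝ, HasDerivAt (fun t => Real.sinh (lam * t)) (lam * Real.cosh (lam * t)) t := by
    intro t
    have h := (Real.hasDerivAt_sinh (lam * t)).comp t ((hasDerivAt_id t).const_mul lam)
    simpa [mul_comm, Function.comp_def] using h
  refine ⟨?_, ?_, ?_, ?_, ?_⟩
  · rintro μ (rfl | rfl) t hD
    · exact ince_eq lam ω _ _ μ hch hsh hμ₀ t hD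
    · exact ince_eq lam ω _ _ μ hsh hch hμ₁ t hD
  · simp [hμ₀ 0]
  · have := (ince_d1 lam ω _ _ μ₀ hch hsh hμ₀ 0).deriv
    simpa using this
  · simp [hμ₁ 0]
  · have := (ince_d1 lam ω _ _ μ₁ hsh hch hμ₁ 0).deriv
    simpa using this
end

section
/- Let λ ∈ ℝ, λ ≠ 0, and let I ⊆ ℝ be an open interval on which cos(λt) ≠ 0. Then μ₀(t) = sinh(λt)·cos(λt) + cosh(λt)·sin(λt) and μ₁(t) = sinh(λt)·sin(λt) + cosh(λt)·cos(λt) both satisfy the equation ∂ₜ²μ + 2λ·tan(λt)·∂ₜμ − 2λ²·μ = 0 on I; moreover μ₀(0) = 0, μ₀'(0) = 2λ, μ₁(0) = 1, μ₁'(0) = 0. -/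
open Real

private lemma hd_base (a t : ℝ) :
    HasDerivAt (fun s => Real.sinh (a*s) * Real.cos (a*s) + Real.cosh (a*s) * Real.sin (a*s))
      (2 * a * (Real.cosh (a*t) * Real.cos (a*t))) t := by
  have h1 : HasDerivAt (fun s : ℝ => a * s) a t := by
    simpa using (hasDerivAt_id t).const_mul a
  have hs := (Real.hasDerivAt_sinh (a*t)).comp t h1
  have hc := (Real.hasDerivAt_cos (a*t)).comp t h1
  have hch := (Real.hasDerivAt_cosh (a*t)).comp t h1
  have hsin := (Real.hasDerivAt_sin (a*t)).comp t h1
  have := (hs.mul hc).add (hch.mul hsin)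
  refine this.congr_deriv ?_
  simp only [Function.comp_apply]; ring

private lemma hd_base' (a t : ℝ) :
    HasDerivAt (fun s => Real.sinh (a*s) * Real.sin (a*s) + Real.cosh (a*s) * Real.cos (a*s))
      (2 * a * (Real.sinh (a*t) * Real.cos (a*t))) t := by
  have h1 : HasDerivAt (fun s : ℝ => a * s) a t := by
    simpa using (hasDerivAt_id t).const_mul a
  have hs := (Real.hasDerivAt_sinh (a*t)).comp t h1
  have hc := (Real.hasDerivAt_cos (a*t)).comp t h1
  have hch := (Real.hasDerivAt_cosh (a*t)).comp t h1
  have hsin := (Real.hasDerivAt_sin (a*t)).comp t h1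
  have := (hs.mul hsin).add (hch.mul hc)
  refine this.congr_deriv ?_
  simp only [Function.comp_apply]; ring

private lemma hd_chcos (a t : ℝ) :
    HasDerivAt (fun s => 2 * a * (Real.cosh (a*s) * Real.cos (a*s)))
      (2 * a^2 * (Real.sinh (a*t) * Real.cos (a*t) - Real.cosh (a*t) * Real.sin (a*t))) t := by
  have h1 : HasDerivAt (fun s : ℝ => a * s) a t := by
    simpa using (hasDerivAt_id t).const_mul a
  have hc := (Real.hasDerivAt_cos (a*t)).comp t h1
  have hch := (Real.hasDerivAt_cosh (a*t)).comp t h1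
  have := ((hch.mul hc)).const_mul (2*a)
  refine this.congr_deriv ?_
  simp only [Function.comp_apply]; ring

private lemma hd_shcos (a t : ℝ) :
    HasDerivAt (fun s => 2 * a * (Real.sinh (a*s) * Real.cos (a*s)))
      (2 * a^2 * (Real.cosh (a*t) * Real.cos (a*t) - Real.sinh (a*t) * Real.sin (a*t))) t := by
  have h1 : HasDerivAt (fun s : ℝ => a * s) a t := by
    simpa using (hasDerivAt_id t).const_mul a
  have hc := (Real.hasDerivAt_cos (a*t)).comp t h1
  have hs := (Real.hasDerivAt_sinh (a*t)).comp t h1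
  have := ((hs.mul hc)).const_mul (2*a)
  refine this.congr_deriv ?_
  simp only [Function.comp_apply]; ring

/-- The case `λ = ω` of Ince's equation: `μ₀(t) = sinh λt cos λt + cosh λt sin λt`
and `μ₁(t) = sinh λt sin λt + cosh λt cos λt` satisfy
`μ'' + 2λ tan(λt) μ' - 2λ² μ = 0` wherever `cos(λt) ≠ 0`, with
`μ₀(0) = 0`, `μ₀'(0) = 2λ`, `μ₁(0) = 1`, `μ₁'(0) = 0`. -/
theorem stmt_10 (lam : ℝ) (hlam : lam ≠ 0)
    (I : Set ℝ) (hI : IsOpen I) (hIconn : I.OrdConnected)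
    (hcos : ∀ t ∈ I, Real.cos (lam * t) ≠ 0)
    (μ₀ μ₁ : ℝ → ℝ)
    (hμ₀ : ∀ t : ℝ, μ₀ t =
      Real.sinh (lam * t) * Real.cos (lam * t) + Real.cosh (lam * t) * Real.sin (lam * t))
    (hμ₁ : ∀ t : ℝ, μ₁ t =
      Real.sinh (lam * t) * Real.sin (lam * t) + Real.cosh (lam * t) * Real.cos (lam * t)) :
    (∀ μ : ℝ → ℝ, (μ = μ₀ ∨ μ = μ₁) → ∀ t ∈ I,
      deriv (deriv μ) t + 2 * lam * Real.tan (lam * t) * deriv μ t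
        - 2 * lam ^ 2 * μ t = 0) ∧
    μ₀ 0 = 0 ∧ deriv μ₀ 0 = 2 * lam ∧ μ₁ 0 = 1 ∧ deriv μ₁ 0 = 0 := by
  have e₀ : μ₀ = fun s => Real.sinh (lam*s) * Real.cos (lam*s) + Real.cosh (lam*s) * Real.sin (lam*s) :=
    funext hμ₀
  have e₁ : μ₁ = fun s => Real.sinh (lam*s) * Real.sin (lam*s) + Real.cosh (lam*s) * Real.cos (lam*s) :=
    funext hμ₁
  have d₀ : deriv μ₀ = fun s => 2 * lam * (Real.cosh (lam*s) * Real.cos (lam*s)) := by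
    funext s
    rw [e₀]
    exact (hd_base lam s).deriv
  have d₁ : deriv μ₁ = fun s => 2 * lam * (Real.sinh (lam*s) * Real.cos (lam*s)) := by
    funext s
    rw [e₁]
    exact (hd_base' lam s).deriv
  have dd₀ : ∀ t, deriv (deriv μ₀) t =
      2 * lam^2 * (Real.sinh (lam*t) * Real.cos (lam*t) - Real.cosh (lam*t) * Real.sin (lam*t)) := by
    intro t
    rw [d₀]
    exact (hd_chcos lam t).deriv
  have dd₁ : ∀ t, deriv (deriv μ₁) t =
      2 * lam^2 * (Real.cosh (lam*t) * Real.cos (lam*t) - Real.sinh (lam*t) * Real.sin (lam*t)) := by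
    intro t
    rw [d₁]
    exact (hd_shcos lam t).deriv
  refine ⟨?_, ?_, ?_, ?_, ?_⟩
  · rintro μ (rfl | rfl) t ht
    · rw [dd₀ t, d₀, hμ₀ t, Real.tan_eq_sin_div_cos]
      have hc := hcos t ht
      have hid : Real.sin (lam*t)^2 = 1 - Real.cos (lam*t)^2 := by
        have := Real.sin_sq_add_cos_sq (lam*t); linarith
      field_simp
      ring
    · rw [dd₁ t, d₁, hμ₁ t, Real.tan_eq_sin_div_cos]
      have hc := hcos t ht
      field_simp
      ring
  · simp [hμ₀ 0]
  · simp [d₀]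
  · simp [hμ₁ 0]
  · simp [d₁]
end

section
/- Let λ ∈ ℝ, λ ≠ 0, and let J ⊆ ℝ be an open interval on which cos(λt) ≠ 0. Suppose μ̂ : ℝ → ℂ is twice differentiable and satisfies the algebraic form ∂_τ²μ̂ + (4τ/(1 + τ²))·∂_τμ̂ − (2/(1 + τ²)²)·μ̂ = 0 for all τ ∈ ℝ. Then the function μ(t) = μ̂(tan(λt)) satisfies ∂ₜ²μ + 2λ·tan(λt)·∂ₜμ − 2λ²·μ = 0 on J. -/
/-- Hamiltonian algebrization (case `λ = ω`): if `μ̂` solves the algebraic form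
`∂_τ²μ̂ + (4τ/(1+τ²))∂_τμ̂ - (2/(1+τ²)²)μ̂ = 0`, then `μ(t) = μ̂(tan λt)` solves
the characteristic equation `∂ₜ²μ + 2λ tan(λt)∂ₜμ - 2λ²μ = 0`. -/
theorem stmt_11 (lam : ℝ) (hlam : lam ≠ 0)
    (J : Set ℝ) (hJ : IsOpen J) (hJconn : J.OrdConnected)
    (hcos : ∀ t ∈ J, Real.cos (lam * t) ≠ 0)
    (μhat : ℝ → ℂ)
    (hdiff : ∀ τ : ℝ, DifferentiableAt ℝ μhat τ)
    (hdiff' : ∀ τ : ℝ, DifferentiableAt ℝ (deriv μhat) τ)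
    (halg : ∀ τ : ℝ,
      deriv (deriv μhat) τ + ((4 * τ / (1 + τ ^ 2) : ℝ) : ℂ) * deriv μhat τ
        - ((2 / (1 + τ ^ 2) ^ 2 : ℝ) : ℂ) * μhat τ = 0)
    (μ : ℝ → ℂ)
    (hμ : ∀ t : ℝ, μ t = μhat (Real.tan (lam * t))) :
    ∀ t ∈ J,
      deriv (deriv μ) t
        + ((2 * lam * Real.tan (lam * t) : ℝ) : ℂ) * deriv μ t
        - ((2 * lam ^ 2 : ℝ) : ℂ) * μ t = 0 := by
  -- derivative of the inner map s ↦ tan (lam * s)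
  have htan : ∀ s : ℝ, Real.cos (lam * s) ≠ 0 →
      HasDerivAt (fun s => Real.tan (lam * s))
        (lam * (1 + Real.tan (lam * s) ^ 2)) s := by
    intro s hs
    have hlin : HasDerivAt (fun x : ℝ => lam * x) lam s := by
      simpa using (hasDerivAt_id s).const_mul lam
    have h1 := (Real.hasDerivAt_tan hs).comp s hlin
    have hsq : (1 : ℝ) / Real.cos (lam * s) ^ 2 = 1 + Real.tan (lam * s) ^ 2 := by
      rw [← Real.inv_one_add_tan_sq hs]
      field_simp
    exact h1.congr_deriv (by simp only [hsq]; ring)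
  -- derivative of μ on the set where cos ≠ 0
  set G : ℝ → ℂ := fun s =>
    ((lam : ℂ) * (1 + (Real.tan (lam * s) : ℂ) ^ 2)) * deriv μhat (Real.tan (lam * s)) with hG
  have hμeq : μ = fun s => μhat (Real.tan (lam * s)) := funext hμ
  have hμ' : ∀ s : ℝ, Real.cos (lam * s) ≠ 0 → HasDerivAt μ (G s) s := by
    intro s hs
    have h2 := ((hdiff (Real.tan (lam * s))).hasDerivAt).scomp s (htan s hs)
    rw [hμeq]
    have : (lam * (1 + Real.tan (lam * s) ^ 2)) • deriv μhat (Real.tan (lam * s)) = G s := by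
      simp only [hG, Complex.real_smul]
      push_cast
      ring
    rw [← this]
    exact h2
  -- the open set where cos ≠ 0
  have hUopen : IsOpen {s : ℝ | Real.cos (lam * s) ≠ 0} := by
    have : Continuous fun s : ℝ => Real.cos (lam * s) :=
      Real.continuous_cos.comp (continuous_const.mul continuous_id)
    exact isOpen_compl_iff.mpr (isClosed_eq this continuous_const)
  intro t ht
  have hct := hcos t ht
  set τ : ℝ := Real.tan (lam * t) with hτ
  -- deriv μ = G in a neighborhood of t
  have hmem : {s : ℝ | Real.cos (lam * s) ≠ 0} ∈ nhds t := hUopen.mem_nhds hct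
  have hEq : deriv μ =ᶠ[nhds t] G := by
    filter_upwards [hmem] with s hs
    exact (hμ' s hs).deriv
  -- derivative of G at t
  have htanC : HasDerivAt (fun s => (Real.tan (lam * s) : ℂ))
      ((lam * (1 + τ ^ 2) : ℝ) : ℂ) t := (htan t hct).ofReal_comp
  have hsq : HasDerivAt (fun s => (Real.tan (lam * s) : ℂ) ^ 2)
      (2 * (τ : ℂ) * ((lam * (1 + τ ^ 2) : ℝ) : ℂ)) t := by
    have h := htanC.mul htanC
    simp only [pow_two]
    exact h.congr_deriv (by rw [← hτ]; push_cast; ring)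
  have hf1 : HasDerivAt (fun s => (lam : ℂ) * (1 + (Real.tan (lam * s) : ℂ) ^ 2))
      ((lam : ℂ) * (2 * (τ : ℂ) * ((lam * (1 + τ ^ 2) : ℝ) : ℂ))) t := by
    simpa using ((hsq.const_add 1).const_mul (lam : ℂ))
  have hf2 : HasDerivAt (fun s => deriv μhat (Real.tan (lam * s)))
      ((lam * (1 + τ ^ 2) : ℝ) • deriv (deriv μhat) τ) t :=
    by have := ((hdiff' τ).hasDerivAt).scomp t (htan t hct); exact this
  have hG' : HasDerivAt G
      ((lam : ℂ) * (2 * (τ : ℂ) * ((lam * (1 + τ ^ 2) : ℝ) : ℂ)) * deriv μhat τ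
        + ((lam : ℂ) * (1 + (τ : ℂ) ^ 2)) *
          ((lam * (1 + τ ^ 2) : ℝ) • deriv (deriv μhat) τ)) t := by
    exact hf1.mul hf2
  have hd2 : deriv (deriv μ) t
      = (lam : ℂ) * (2 * (τ : ℂ) * ((lam * (1 + τ ^ 2) : ℝ) : ℂ)) * deriv μhat τ
        + ((lam : ℂ) * (1 + (τ : ℂ) ^ 2)) *
          ((lam * (1 + τ ^ 2) : ℝ) • deriv (deriv μhat) τ) := by
    rw [hEq.deriv_eq]
    exact hG'.deriv
  have hd1 : deriv μ t = G t := (hμ' t hct).deriv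
  -- algebra
  have hne : (1 : ℂ) + (τ : ℂ) ^ 2 ≠ 0 := by
    have : (0 : ℝ) < 1 + τ ^ 2 := by positivity
    exact_mod_cast this.ne'
  have halgτ := halg τ
  have hμt : μ t = μhat τ := by rw [hμ t, hτ]
  rw [hd2, hd1, hμt]
  simp only [hG, ← hτ]
  have hsub : deriv (deriv μhat) τ
      = - ((4 * τ / (1 + τ ^ 2) : ℝ) : ℂ) * deriv μhat τ
        + ((2 / (1 + τ ^ 2) ^ 2 : ℝ) : ℂ) * μhat τ := by
    linear_combination halgτ
  rw [hsub]
  push_cast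
  have h2 : ((1 : ℂ) + (τ : ℂ) ^ 2) ^ 2 ≠ 0 := pow_ne_zero 2 hne
  simp only [Complex.real_smul]
  push_cast
  field_simp [Complex.real_smul]
  ring
end

section
/- Let C₁, C₂ ∈ ℂ. The function μ̂(τ) = C₁·e^{−arctan(τ)}·(τ − 1)/√(1 + τ²) + C₂·e^{arctan(τ)}·(τ + 1)/√(1 + τ²) satisfies the equation ∂_τ²μ̂ + (4τ/(1 + τ²))·∂_τμ̂ − (2/(1 + τ²)²)·μ̂ = 0 for all τ ∈ ℝ. -/
lemma sqrt_hasDeriv (τ : ℝ) :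
    HasDerivAt (fun x : ℝ => Real.sqrt (1 + x ^ 2)) (τ / Real.sqrt (1 + τ ^ 2)) τ := by
  have h1 : HasDerivAt (fun x : ℝ => 1 + x ^ 2) (2 * τ) τ := by
    simpa using (hasDerivAt_pow 2 τ).const_add 1
  have h2 := (Real.hasDerivAt_sqrt (by positivity : (1 + τ ^ 2 : ℝ) ≠ 0)).comp τ h1
  have hs : Real.sqrt (1 + τ ^ 2) ≠ 0 := by positivity
  refine h2.congr_deriv (Eq.symm ?_)
  field_simp

lemma gε_hasDeriv (ε τ : ℝ) (hε : ε ^ 2 = 1) :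
    HasDerivAt (fun x : ℝ => Real.exp (ε * Real.arctan x) * (x + ε) / Real.sqrt (1 + x ^ 2))
      (2 * Real.exp (ε * Real.arctan τ) / ((1 + τ ^ 2) * Real.sqrt (1 + τ ^ 2))) τ := by
  have ha : HasDerivAt (fun x : ℝ => Real.exp (ε * Real.arctan x))
      (Real.exp (ε * Real.arctan τ) * (ε * (1 / (1 + τ ^ 2)))) τ :=
    ((Real.hasDerivAt_arctan τ).const_mul ε).exp
  have hnum : HasDerivAt (fun x : ℝ => Real.exp (ε * Real.arctan x) * (x + ε))
      (Real.exp (ε * Real.arctan τ) * (ε * (1 / (1 + τ ^ 2))) * (τ + ε)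
        + Real.exp (ε * Real.arctan τ) * 1) τ :=
    ha.mul ((hasDerivAt_id τ).add_const ε)
  have hs0 : Real.sqrt (1 + τ ^ 2) ≠ 0 := by positivity
  have hd := hnum.div (sqrt_hasDeriv τ) hs0
  refine hd.congr_deriv (Eq.symm ?_)
  have hs2 : Real.sqrt (1 + τ ^ 2) ^ 2 = 1 + τ ^ 2 := Real.sq_sqrt (by positivity)
  have hp : (1 + τ ^ 2 : ℝ) ≠ 0 := by positivity
  field_simp
  linear_combination
    (-(1 + τ ^ 2)) * hε + (2 - ε * τ - ε ^ 2 - (1 + τ ^ 2)) * hs2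

lemma gε'_hasDeriv (ε τ : ℝ) :
    HasDerivAt (fun x : ℝ => 2 * Real.exp (ε * Real.arctan x) / ((1 + x ^ 2) * Real.sqrt (1 + x ^ 2)))
      (2 * Real.exp (ε * Real.arctan τ) * (ε - 3 * τ) / ((1 + τ ^ 2) ^ 2 * Real.sqrt (1 + τ ^ 2))) τ := by
  have ha : HasDerivAt (fun x : ℝ => 2 * Real.exp (ε * Real.arctan x))
      (2 * (Real.exp (ε * Real.arctan τ) * (ε * (1 / (1 + τ ^ 2))))) τ :=
    (((Real.hasDerivAt_arctan τ).const_mul ε).exp).const_mul 2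
  have h1 : HasDerivAt (fun x : ℝ => 1 + x ^ 2) (2 * τ) τ := by
    simpa using (hasDerivAt_pow 2 τ).const_add 1
  have hden : HasDerivAt (fun x : ℝ => (1 + x ^ 2) * Real.sqrt (1 + x ^ 2))
      (2 * τ * Real.sqrt (1 + τ ^ 2) + (1 + τ ^ 2) * (τ / Real.sqrt (1 + τ ^ 2))) τ :=
    h1.mul (sqrt_hasDeriv τ)
  have hs0 : Real.sqrt (1 + τ ^ 2) ≠ 0 := by positivity
  have hp : (1 + τ ^ 2 : ℝ) ≠ 0 := by positivity
  have hden0 : (1 + τ ^ 2) * Real.sqrt (1 + τ ^ 2) ≠ 0 := mul_ne_zero hp hs0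
  have hd := ha.div hden hden0
  refine hd.congr_deriv (Eq.symm ?_)
  have hs2 : Real.sqrt (1 + τ ^ 2) ^ 2 = 1 + τ ^ 2 := Real.sq_sqrt (by positivity)
  have h3 : Real.sqrt (1 + τ ^ 2) ^ 3 = (1 + τ ^ 2) * Real.sqrt (1 + τ ^ 2) := by
    rw [pow_succ, hs2]
  field_simp
  ring_nf
  rw [hs2]
  ring

/-- The general solution of the algebrized characteristic equation of the
degenerate parametric oscillator (case `λ = ω`):
`μ̂(τ) = C₁ e^{-arctan τ}(τ-1)/√(1+τ²) + C₂ e^{arctan τ}(τ+1)/√(1+τ²)`. -/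
theorem stmt_12 (C₁ C₂ : ℂ)
    (μhat : ℝ → ℂ)
    (hμhat : ∀ τ : ℝ, μhat τ =
      C₁ * (Real.exp (-Real.arctan τ) : ℂ) * ((τ : ℂ) - 1)
          / ((Real.sqrt (1 + τ ^ 2) : ℝ) : ℂ)
        + C₂ * (Real.exp (Real.arctan τ) : ℂ) * ((τ : ℂ) + 1)
          / ((Real.sqrt (1 + τ ^ 2) : ℝ) : ℂ)) :
    ∀ τ : ℝ,
      deriv (deriv μhat) τ + ((4 * τ / (1 + τ ^ 2) : ℝ) : ℂ) * deriv μhat τ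
        - ((2 / (1 + τ ^ 2) ^ 2 : ℝ) : ℂ) * μhat τ = 0 := by
  have hfun : μhat = fun x : ℝ =>
      C₁ * ((Real.exp ((-1) * Real.arctan x) * (x + (-1)) / Real.sqrt (1 + x ^ 2) : ℝ) : ℂ)
        + C₂ * ((Real.exp (1 * Real.arctan x) * (x + 1) / Real.sqrt (1 + x ^ 2) : ℝ) : ℂ) := by
    funext x
    rw [hμhat]
    push_cast [neg_one_mul, one_mul]
    ring
  have hd1 : ∀ x : ℝ, HasDerivAt μhat
      (C₁ * ((2 * Real.exp ((-1) * Real.arctan x) / ((1 + x ^ 2) * Real.sqrt (1 + x ^ 2)) : ℝ) : ℂ)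
        + C₂ * ((2 * Real.exp (1 * Real.arctan x) / ((1 + x ^ 2) * Real.sqrt (1 + x ^ 2)) : ℝ) : ℂ)) x := by
    intro x
    rw [hfun]
    exact (((gε_hasDeriv (-1) x (by norm_num)).ofReal_comp.const_mul C₁).add
      ((gε_hasDeriv 1 x (by norm_num)).ofReal_comp.const_mul C₂))
  have hdμ : deriv μhat = fun x : ℝ =>
      C₁ * ((2 * Real.exp ((-1) * Real.arctan x) / ((1 + x ^ 2) * Real.sqrt (1 + x ^ 2)) : ℝ) : ℂ)
        + C₂ * ((2 * Real.exp (1 * Real.arctan x) / ((1 + x ^ 2) * Real.sqrt (1 + x ^ 2)) : ℝ) : ℂ) :=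
    funext fun x => (hd1 x).deriv
  intro τ
  have hd2 : HasDerivAt (deriv μhat)
      (C₁ * ((2 * Real.exp ((-1) * Real.arctan τ) * ((-1) - 3 * τ) / ((1 + τ ^ 2) ^ 2 * Real.sqrt (1 + τ ^ 2)) : ℝ) : ℂ)
        + C₂ * ((2 * Real.exp (1 * Real.arctan τ) * (1 - 3 * τ) / ((1 + τ ^ 2) ^ 2 * Real.sqrt (1 + τ ^ 2)) : ℝ) : ℂ)) τ := by
    rw [hdμ]
    exact (((gε'_hasDeriv (-1) τ).ofReal_comp.const_mul C₁).add
      ((gε'_hasDeriv 1 τ).ofReal_comp.const_mul C₂))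
  rw [hd2.deriv, hdμ, hμhat τ]
  have hp : (1 + τ ^ 2 : ℝ) ≠ 0 := by positivity
  have hs0 : Real.sqrt (1 + τ ^ 2) ≠ 0 := by positivity
  have hS0 : ((Real.sqrt (1 + τ ^ 2) : ℝ) : ℂ) ≠ 0 := by exact_mod_cast hs0
  have hP0 : ((1 + τ ^ 2 : ℝ) : ℂ) ≠ 0 := by exact_mod_cast hp
  have hP0' : (1 : ℂ) + (τ : ℂ) ^ 2 ≠ 0 := by push_cast at hP0; exact hP0
  simp only [neg_one_mul, one_mul]
  push_cast
  field_simp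
  ring
end

section
/- Let C₁, C₂ ∈ ℂ. The function y(τ) = C₁·e^{−arctan(τ)}·(τ − 1)·√(1 + τ²) + C₂·e^{arctan(τ)}·(τ + 1)·√(1 + τ²) satisfies ∂_τ²y = ((2τ² + 4)/(1 + τ²)²)·y for all τ ∈ ℝ. -/
open Real in
lemma aux_d1 (ε : ℝ) (hε : ε = 1 ∨ ε = -1) (τ : ℝ) :
    HasDerivAt (fun t : ℝ =>
      (Real.exp (ε * Real.arctan t) : ℂ) * ((t : ℂ) + ε) * ((Real.sqrt (1 + t ^ 2) : ℝ) : ℂ))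
      ((Real.exp (ε * Real.arctan τ) : ℂ) * (2 * ((τ:ℂ)^2 + ε * τ + 1))
        / ((Real.sqrt (1 + τ ^ 2) : ℝ) : ℂ)) τ := by
  have hpos : (0:ℝ) < 1 + τ ^ 2 := by positivity
  have hsne : Real.sqrt (1 + τ ^ 2) ≠ 0 := by positivity
  have hne : (1 + τ ^ 2 : ℝ) ≠ 0 := hpos.ne'
  have hA : HasDerivAt (fun t : ℝ => (Real.exp (ε * Real.arctan t) : ℂ))
      ((Real.exp (ε * Real.arctan τ) * (ε * (1 / (1 + τ ^ 2))) : ℝ) : ℂ) τ :=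
    (((Real.hasDerivAt_arctan τ).const_mul ε).exp).ofReal_comp
  have hB : HasDerivAt (fun t : ℝ => ((t : ℂ) + ε)) 1 τ := by
    simpa using (hasDerivAt_id τ).ofReal_comp.add_const (ε : ℂ)
  have hC : HasDerivAt (fun t : ℝ => ((Real.sqrt (1 + t ^ 2) : ℝ) : ℂ))
      (((2 * τ) / (2 * Real.sqrt (1 + τ ^ 2)) : ℝ) : ℂ) τ :=
    (((hasDerivAt_pow 2 τ).const_add 1).sqrt hne).ofReal_comp.congr_deriv (by push_cast; ring)
  have h := (hA.mul hB).mul hC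
  have hsq : ((Real.sqrt (1 + τ ^ 2) : ℝ) : ℂ) ^ 2 = 1 + (τ:ℂ) ^ 2 := by
    rw [← Complex.ofReal_pow, Real.sq_sqrt hpos.le]; push_cast; ring
  refine h.congr_deriv (Eq.symm ?_)
  have hs : ((Real.sqrt (1 + τ ^ 2) : ℝ) : ℂ) ≠ 0 := Complex.ofReal_ne_zero.mpr hsne
  have hne' : (1 + (τ:ℂ) ^ 2) ≠ 0 := by rw [← hsq]; exact pow_ne_zero 2 hs
  set E : ℂ := (Real.exp (ε * Real.arctan τ) : ℂ) with hE
  set s : ℂ := ((Real.sqrt (1 + τ ^ 2) : ℝ) : ℂ) with hS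
  simp only [Complex.ofReal_mul, Complex.ofReal_div, Complex.ofReal_one, Complex.ofReal_add,
    Complex.ofReal_pow, Complex.ofReal_ofNat, Pi.mul_apply, ← hE, ← hS]
  have hε2 : ((ε:ℂ))^2 = 1 := by rcases hε with rfl | rfl <;> norm_num
  field_simp
  linear_combination (-E*((ε:ℂ)*τ + (ε:ℂ)^2 + 1 + (τ:ℂ)^2))*hsq - E*(1+(τ:ℂ)^2)*hε2

open Real in
lemma aux_d2 (ε : ℝ) (hε : ε = 1 ∨ ε = -1) (τ : ℝ) :
    HasDerivAt (fun t : ℝ =>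
      (Real.exp (ε * Real.arctan t) : ℂ) * (2 * ((t:ℂ)^2 + ε * t + 1))
        / ((Real.sqrt (1 + t ^ 2) : ℝ) : ℂ))
      ((((2 * τ ^ 2 + 4) / (1 + τ ^ 2) ^ 2 : ℝ) : ℂ) *
        ((Real.exp (ε * Real.arctan τ) : ℂ) * ((τ : ℂ) + ε)
          * ((Real.sqrt (1 + τ ^ 2) : ℝ) : ℂ))) τ := by
  have hpos : (0:ℝ) < 1 + τ ^ 2 := by positivity
  have hsne : Real.sqrt (1 + τ ^ 2) ≠ 0 := by positivity
  have hne : (1 + τ ^ 2 : ℝ) ≠ 0 := hpos.ne'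
  have hA : HasDerivAt (fun t : ℝ => (Real.exp (ε * Real.arctan t) : ℂ))
      ((Real.exp (ε * Real.arctan τ) * (ε * (1 / (1 + τ ^ 2))) : ℝ) : ℂ) τ :=
    (((Real.hasDerivAt_arctan τ).const_mul ε).exp).ofReal_comp
  have hB : HasDerivAt (fun t : ℝ => (2 * ((t:ℂ)^2 + (ε:ℂ) * t + 1)))
      ((2 : ℂ) * (2 * (τ:ℂ) + (ε:ℂ))) τ := by
    have hz : HasDerivAt (fun z : ℂ => 2 * (z^2 + (ε:ℂ) * z + 1))
        ((2 : ℂ) * (2 * (τ:ℂ) + (ε:ℂ))) (τ:ℂ) := by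
      have := (((hasDerivAt_pow 2 ((τ:ℂ))).add
        ((hasDerivAt_id ((τ:ℂ))).const_mul (ε:ℂ))).add_const 1).const_mul (2:ℂ)
      simpa using this.congr_deriv (by ring)
    exact hz.comp_ofReal
  have hC : HasDerivAt (fun t : ℝ => ((Real.sqrt (1 + t ^ 2) : ℝ) : ℂ))
      (((2 * τ) / (2 * Real.sqrt (1 + τ ^ 2)) : ℝ) : ℂ) τ :=
    (((hasDerivAt_pow 2 τ).const_add 1).sqrt hne).ofReal_comp.congr_deriv (by push_cast; ring)
  have hs : ((Real.sqrt (1 + τ ^ 2) : ℝ) : ℂ) ≠ 0 := Complex.ofReal_ne_zero.mpr hsne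
  have h := (hA.mul hB).div hC hs
  have hsq : ((Real.sqrt (1 + τ ^ 2) : ℝ) : ℂ) ^ 2 = 1 + (τ:ℂ) ^ 2 := by
    rw [← Complex.ofReal_pow, Real.sq_sqrt hpos.le]; push_cast; ring
  refine h.congr_deriv (Eq.symm ?_)
  have hne' : (1 + (τ:ℂ) ^ 2) ≠ 0 := by rw [← hsq]; exact pow_ne_zero 2 hs
  set E : ℂ := (Real.exp (ε * Real.arctan τ) : ℂ) with hE
  set s : ℂ := ((Real.sqrt (1 + τ ^ 2) : ℝ) : ℂ) with hS
  simp only [Complex.ofReal_mul, Complex.ofReal_div, Complex.ofReal_one, Complex.ofReal_add,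
    Complex.ofReal_pow, Complex.ofReal_ofNat, Pi.mul_apply, ← hE, ← hS]
  have hε2 : ((ε:ℂ))^2 = 1 := by rcases hε with rfl | rfl <;> norm_num
  field_simp
  linear_combination ((2*(τ:ℂ)^2+4)*E*((τ:ℂ)+ε)*(s^2+1+(τ:ℂ)^2) - 2*(1+(τ:ℂ)^2)*E*((ε:ℂ)*((τ:ℂ)^2+ε*τ+1) + (1+(τ:ℂ)^2)*(2*τ+ε)))*hsq - 2*(1+(τ:ℂ)^2)^2*E*τ*hε2


/-- The general solution of the reduced algebrized characteristic equation of
the degenerate parametric oscillator (case `λ = ω`):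
`y(τ) = C₁ e^{-arctan τ}(τ-1)√(1+τ²) + C₂ e^{arctan τ}(τ+1)√(1+τ²)` satisfies
`∂_τ²y = ((2τ²+4)/(1+τ²)²) y`. -/
theorem stmt_14 (C₁ C₂ : ℂ)
    (y : ℝ → ℂ)
    (hy : ∀ τ : ℝ, y τ =
      C₁ * (Real.exp (-Real.arctan τ) : ℂ) * ((τ : ℂ) - 1)
          * ((Real.sqrt (1 + τ ^ 2) : ℝ) : ℂ)
        + C₂ * (Real.exp (Real.arctan τ) : ℂ) * ((τ : ℂ) + 1)
          * ((Real.sqrt (1 + τ ^ 2) : ℝ) : ℂ)) :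
    ∀ τ : ℝ,
      deriv (deriv y) τ = (((2 * τ ^ 2 + 4) / (1 + τ ^ 2) ^ 2 : ℝ) : ℂ) * y τ := by
  have hyfun : y = fun t : ℝ =>
      C₁ * ((Real.exp ((-1 : ℝ) * Real.arctan t) : ℂ) * ((t : ℂ) + ((-1 : ℝ) : ℂ))
          * ((Real.sqrt (1 + t ^ 2) : ℝ) : ℂ))
        + C₂ * ((Real.exp ((1 : ℝ) * Real.arctan t) : ℂ) * ((t : ℂ) + ((1 : ℝ) : ℂ))
          * ((Real.sqrt (1 + t ^ 2) : ℝ) : ℂ)) := by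
    funext t
    rw [hy t]
    push_cast
    ring_nf
  -- first derivative
  have hD : ∀ τ : ℝ, HasDerivAt y
      (C₁ * ((Real.exp ((-1 : ℝ) * Real.arctan τ) : ℂ) * (2 * ((τ:ℂ)^2 + ((-1:ℝ):ℂ) * τ + 1))
          / ((Real.sqrt (1 + τ ^ 2) : ℝ) : ℂ))
        + C₂ * ((Real.exp ((1 : ℝ) * Real.arctan τ) : ℂ) * (2 * ((τ:ℂ)^2 + ((1:ℝ):ℂ) * τ + 1))
          / ((Real.sqrt (1 + τ ^ 2) : ℝ) : ℂ))) τ := by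
    intro τ
    rw [hyfun]
    exact ((aux_d1 (-1) (Or.inr rfl) τ).const_mul C₁).add ((aux_d1 1 (Or.inl rfl) τ).const_mul C₂)
  have hderiv : deriv y = fun τ : ℝ =>
      C₁ * ((Real.exp ((-1 : ℝ) * Real.arctan τ) : ℂ) * (2 * ((τ:ℂ)^2 + ((-1:ℝ):ℂ) * τ + 1))
          / ((Real.sqrt (1 + τ ^ 2) : ℝ) : ℂ))
        + C₂ * ((Real.exp ((1 : ℝ) * Real.arctan τ) : ℂ) * (2 * ((τ:ℂ)^2 + ((1:ℝ):ℂ) * τ + 1))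
          / ((Real.sqrt (1 + τ ^ 2) : ℝ) : ℂ)) := funext fun τ => (hD τ).deriv
  intro τ
  -- second derivative
  have h2 : HasDerivAt (deriv y)
      (C₁ * ((((2 * τ ^ 2 + 4) / (1 + τ ^ 2) ^ 2 : ℝ) : ℂ) *
          ((Real.exp ((-1:ℝ) * Real.arctan τ) : ℂ) * ((τ : ℂ) + ((-1:ℝ):ℂ))
            * ((Real.sqrt (1 + τ ^ 2) : ℝ) : ℂ)))
        + C₂ * ((((2 * τ ^ 2 + 4) / (1 + τ ^ 2) ^ 2 : ℝ) : ℂ) *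
          ((Real.exp ((1:ℝ) * Real.arctan τ) : ℂ) * ((τ : ℂ) + ((1:ℝ):ℂ))
            * ((Real.sqrt (1 + τ ^ 2) : ℝ) : ℂ)))) τ := by
    rw [hderiv]
    exact ((aux_d2 (-1) (Or.inr rfl) τ).const_mul C₁).add ((aux_d2 1 (Or.inl rfl) τ).const_mul C₂)
  rw [h2.deriv, hy τ]
  push_cast
  ring
end
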